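/- For λ ∈ [0,1] and θ ∈ [0, π/2], the Gisin state ρ_G(λ,θ) is separable if and only if λ(1 + sin 2θ) ≤ 1. -/

import Mathlib

open Matrix Real
open scoped Kronecker ComplexOrder

def pairToFin4 (p : Fin 2 × Fin 2) : Fin 4 := ⟨2 * p.1.val + p.2.val, by omega⟩

/-- The Gisin state `ρ_G(λ,θ)`, indexed by `Fin 2 × Fin 2` in the basis order
`(0,0), (0,1), (1,0), (1,1)`. -/
noncomputable def gisinState (l t : ℝ) : Matrix (Fin 2 × Fin 2) (Fin 2 × Fin 2) ℂ :=
  fun p q =>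
    !![(((1 - l) / 2 : ℝ) : ℂ), 0, 0, 0;
       0, ((l * Real.sin t ^ 2 : ℝ) : ℂ), ((l * Real.sin t * Real.cos t : ℝ) : ℂ), 0;
       0, ((l * Real.sin t * Real.cos t : ℝ) : ℂ), ((l * Real.cos t ^ 2 : ℝ) : ℂ), 0;
       0, 0, 0, (((1 - l) / 2 : ℝ) : ℂ)] (pairToFin4 p) (pairToFin4 q)

def IsDensityMatrix {n : Type*} [Fintype n] [DecidableEq n] (ρ : Matrix n n ℂ) : Prop :=
  ρ.PosSemidef ∧ ρ.trace = 1

/-- A bipartite density matrix is separable if it is a finite convex combination of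
Kronecker products of density matrices. -/
def IsSeparableState {m n : ℕ} (ρ : Matrix (Fin m × Fin n) (Fin m × Fin n) ℂ) : Prop :=
  ∃ (k : ℕ) (p : Fin k → ℝ) (σ : Fin k → Matrix (Fin m) (Fin m) ℂ)
    (τ : Fin k → Matrix (Fin n) (Fin n) ℂ),
    (∀ i, 0 ≤ p i) ∧ (∑ i, p i = 1) ∧
    (∀ i, IsDensityMatrix (σ i)) ∧ (∀ i, IsDensityMatrix (τ i)) ∧
    ρ = ∑ i, (p i : ℂ) • (σ i ⊗ₖ τ i)

/-!
Necessity is the Peres criterion: the partial transpose of a separable state is positive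
semidefinite, and the partial transpose of `ρ_G(λ, θ)` has expectation `1 - λ (1 + sin 2θ)` in the
vector `|00⟩ - |11⟩`.

For sufficiency, `ρ_G(λ, θ)` is affine in `λ`, so it is enough to show that `ρ_G(0, θ)`, a mixture
of `|00⟩⟨00|` and `|11⟩⟨11|`, and the boundary state `ρ_G(λ₀, θ)` with `λ₀ = 1 / (1 + sin 2θ)` are
separable. The boundary state is the average over `k = 0, …, 3` of the product states
`(a, iᵏ b) ⊗ (b, iᵏ a)` with `a² = sin θ / (sin θ + cos θ)` and `b² = cos θ / (sin θ + cos θ)`: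
averaging over the phases kills every coherence except those between basis vectors `|x y⟩` with
the same excitation number `x + y`.
-/

namespace Matrix

variable {R ι κ : Type*}

def partialTranspose (ρ : Matrix (ι × κ) (ι × κ) R) : Matrix (ι × κ) (ι × κ) R :=
  fun p q => ρ (p.1, q.2) (q.1, p.2)

@[simp]
lemma partialTranspose_apply (ρ : Matrix (ι × κ) (ι × κ) R) (a b : ι) (e f : κ) :
    ρ.partialTranspose (a, e) (b, f) = ρ (a, f) (b, e) := rfl

@[simp]
lemma partialTranspose_kronecker [Mul R] (A : Matrix ι ι R) (B : Matrix κ κ R) :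
    (A ⊗ₖ B).partialTranspose = A ⊗ₖ Bᵀ := rfl

@[simp]
lemma partialTranspose_sum [AddCommMonoid R] {k : Type*} (s : Finset k)
    (ρ : k → Matrix (ι × κ) (ι × κ) R) :
    (∑ i ∈ s, ρ i).partialTranspose = ∑ i ∈ s, (ρ i).partialTranspose := by
  ext; simp [partialTranspose, sum_apply]

@[simp]
lemma partialTranspose_smul {S : Type*} [SMul S R] (c : S) (ρ : Matrix (ι × κ) (ι × κ) R) :
    (c • ρ).partialTranspose = c • ρ.partialTranspose := rfl

end Matrix

lemma IsSeparableState.posSemidef_partialTranspose {m n : ℕ}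
    {ρ : Matrix (Fin m × Fin n) (Fin m × Fin n) ℂ} (hρ : IsSeparableState ρ) :
    ρ.partialTranspose.PosSemidef := by
  obtain ⟨k, p, σ, τ, hp, -, hσ, hτ, rfl⟩ := hρ
  simp only [partialTranspose_sum, partialTranspose_smul, partialTranspose_kronecker]
  exact posSemidef_sum _ fun i _ =>
    ((hσ i).1.kronecker (hτ i).1.transpose).smul (Complex.zero_le_real.mpr (hp i))

lemma le_one_of_isSeparableState_gisinState {l t : ℝ} (h : IsSeparableState (gisinState l t)) :
    l * (1 + sin (2 * t)) ≤ 1 := by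
  set x : Fin 2 × Fin 2 → ℂ := Pi.single (0, 0) 1 - Pi.single (1, 1) 1
  have hx : star x ⬝ᵥ (gisinState l t).partialTranspose *ᵥ x =
      ((1 - l * (1 + sin (2 * t)) : ℝ) : ℂ) := by
    simp [x, dotProduct, mulVec, Fintype.sum_prod_type, Fin.sum_univ_two, gisinState, pairToFin4,
      Pi.single_apply, sin_two_mul]
    ring
  have := h.posSemidef_partialTranspose.dotProduct_mulVec_nonneg x
  rw [hx, Complex.zero_le_real] at this
  linarith

lemma IsSeparableState.convexComb {m n : ℕ} {ρ₁ ρ₂ : Matrix (Fin m × Fin n) (Fin m × Fin n) ℂ}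
    (h₁ : IsSeparableState ρ₁) (h₂ : IsSeparableState ρ₂) {a : ℝ} (ha₀ : 0 ≤ a) (ha₁ : a ≤ 1) :
    IsSeparableState ((a : ℂ) • ρ₁ + ((1 - a : ℝ) : ℂ) • ρ₂) := by
  obtain ⟨k₁, p₁, σ₁, τ₁, hp₁, hs₁, hσ₁, hτ₁, rfl⟩ := h₁
  obtain ⟨k₂, p₂, σ₂, τ₂, hp₂, hs₂, hσ₂, hτ₂, rfl⟩ := h₂
  refine ⟨k₁ + k₂, Fin.append (a • p₁) ((1 - a) • p₂), Fin.append σ₁ σ₂, Fin.append τ₁ τ₂,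
    ?_, ?_, ?_, ?_, ?_⟩
  · refine Fin.addCases (fun i => ?_) (fun i => ?_) <;>
      simp only [Fin.append_left, Fin.append_right, Pi.smul_apply, smul_eq_mul]
    · exact mul_nonneg ha₀ (hp₁ i)
    · exact mul_nonneg (by linarith) (hp₂ i)
  · simp [Fin.sum_univ_add, ← Finset.mul_sum, hs₁, hs₂]
  · exact Fin.addCases (by simpa using hσ₁) (by simpa using hσ₂)
  · exact Fin.addCases (by simpa using hτ₁) (by simpa using hτ₂)
  · simp only [Fin.sum_univ_add, Fin.append_left, Fin.append_right, Pi.smul_apply, smul_eq_mul,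
      Complex.ofReal_mul, Finset.smul_sum, smul_smul]

noncomputable def pureState {n : Type*} (u : n → ℂ) : Matrix n n ℂ := vecMulVec u (star u)

open Complex in
lemma sum_I_pow_mul_conj {n m : ℕ} (hn : n ≤ 2) (hm : m ≤ 2) :
    ∑ k : Fin 4, I ^ (k.val * n) * star (I ^ (k.val * m)) = if n = m then 4 else 0 := by
  interval_cases n <;> interval_cases m <;>
    simp [Fin.sum_univ_four, pow_mul, Complex.ext_iff, pow_succ] <;> norm_num

noncomputable def phaseShift (k : ℕ) (u : Fin 2 → ℂ) : Fin 2 → ℂ :=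
  fun i => Complex.I ^ (k * i.val) * u i

def dephasedProduct (α β : Fin 2 → ℂ) : Matrix (Fin 2 × Fin 2) (Fin 2 × Fin 2) ℂ :=
  fun p q => if p.1.val + p.2.val = q.1.val + q.2.val then
    α p.1 * β p.2 * star (α q.1 * β q.2) else 0

lemma sum_pureState_phaseShift_kronecker (α β : Fin 2 → ℂ) :
    ∑ k : Fin 4, pureState (phaseShift k α) ⊗ₖ pureState (phaseShift k β) =
      (4 : ℂ) • dephasedProduct α β := by
  ext ⟨a, e⟩ ⟨b, f⟩
  rw [Matrix.sum_apply]
  calc _ = ∑ k : Fin 4, α a * β e * star (α b * β f) *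
        (Complex.I ^ (k.val * (a.val + e.val)) * star (Complex.I ^ (k.val * (b.val + f.val)))) := by
        refine Finset.sum_congr rfl fun k _ => ?_
        simp only [kroneckerMap_apply, pureState, vecMulVec_apply, phaseShift, Pi.star_apply,
          star_mul, mul_add, pow_add]
        ring
    _ = _ := by
        rw [← Finset.mul_sum, sum_I_pow_mul_conj (by omega) (by omega)]
        simp only [dephasedProduct, Matrix.smul_apply, smul_eq_mul]
        split_ifs <;> ring

lemma star_phaseShift_dotProduct (k : ℕ) (u : Fin 2 → ℂ) :
    star (phaseShift k u) ⬝ᵥ phaseShift k u = star u ⬝ᵥ u := by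
  simp [dotProduct, phaseShift, Fin.sum_univ_two, mul_mul_mul_comm, ← mul_pow]

lemma isDensityMatrix_pureState {n : Type*} [Fintype n] [DecidableEq n] {u : n → ℂ}
    (hu : star u ⬝ᵥ u = 1) : IsDensityMatrix (pureState u) := by
  refine ⟨posSemidef_vecMulVec_self_star u, ?_⟩
  rw [← hu]
  simp [pureState, trace, vecMulVec_apply, dotProduct, mul_comm]

lemma isSeparableState_dephasedProduct {α β : Fin 2 → ℂ} (hα : star α ⬝ᵥ α = 1)
    (hβ : star β ⬝ᵥ β = 1) : IsSeparableState (dephasedProduct α β) := by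
  refine ⟨4, fun _ => 1 / 4, fun k => pureState (phaseShift k α),
    fun k => pureState (phaseShift k β), fun _ => by norm_num, by norm_num,
    fun k => isDensityMatrix_pureState (by rwa [star_phaseShift_dotProduct]),
    fun k => isDensityMatrix_pureState (by rwa [star_phaseShift_dotProduct]), ?_⟩
  rw [← Finset.smul_sum, sum_pureState_phaseShift_kronecker, smul_smul]
  norm_num

lemma gisinState_convexComb (a x y t : ℝ) :
    gisinState (a * x + (1 - a) * y) t =
      (a : ℂ) • gisinState x t + ((1 - a : ℝ) : ℂ) • gisinState y t := by
  ext ⟨i, j⟩ ⟨k, l⟩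
  fin_cases i <;> fin_cases j <;> fin_cases k <;> fin_cases l <;>
    simp [gisinState, pairToFin4] <;> ring

lemma gisinState_eq_dephasedProduct {a b t : ℝ} (hs : a ^ 2 * (sin t + cos t) = sin t)
    (hc : b ^ 2 * (sin t + cos t) = cos t) (hd : 0 < sin t + cos t) :
    gisinState (1 + sin (2 * t))⁻¹ t = dephasedProduct ![(a : ℂ), b] ![(b : ℂ), a] := by
  set l := (1 + sin (2 * t))⁻¹
  have hsc := sin_sq_add_cos_sq t
  have hl : l * (sin t + cos t) ^ 2 = 1 := by
    have : 1 + sin (2 * t) = (sin t + cos t) ^ 2 := by rw [sin_two_mul]; linear_combination -hsc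
    rw [← this]
    exact inv_mul_cancel₀ (this ▸ by positivity)
  have h₁ : l * sin t ^ 2 = a * a * (a * a) := by
    linear_combination (-l * (sin t + a ^ 2 * (sin t + cos t))) * hs + a ^ 4 * hl
  have h₂ : l * sin t * cos t = a * a * (b * b) := by
    linear_combination (-l * cos t) * hs + (-l * a ^ 2 * (sin t + cos t)) * hc + a ^ 2 * b ^ 2 * hl
  have h₃ : l * cos t ^ 2 = b * b * (b * b) := by
    linear_combination (-l * (cos t + b ^ 2 * (sin t + cos t))) * hc + b ^ 4 * hl
  have h₀ : (1 - l) / 2 = a * b * (a * b) := by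
    linear_combination h₂ - hl / 2 + l / 2 * hsc
  ext ⟨i, j⟩ ⟨k, m⟩
  fin_cases i <;> fin_cases j <;> fin_cases k <;> fin_cases m <;>
    simp [gisinState, pairToFin4, dephasedProduct, h₀, h₁, h₂, h₃] <;> ring

lemma isSeparableState_gisinState_inv_one_add_sin_two_mul {t : ℝ}
    (ht : t ∈ Set.Icc (0 : ℝ) (π / 2)) :
    IsSeparableState (gisinState (1 + sin (2 * t))⁻¹ t) := by
  have hs : 0 ≤ sin t := sin_nonneg_of_nonneg_of_le_pi ht.1 (by linarith [pi_pos, ht.2])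
  have hc : 0 ≤ cos t := cos_nonneg_of_mem_Icc ⟨by linarith [pi_pos, ht.1], ht.2⟩
  have hd : 0 < sin t + cos t := by nlinarith [sin_sq_add_cos_sq t]
  set a := √(sin t / (sin t + cos t))
  set b := √(cos t / (sin t + cos t))
  have ha : a ^ 2 * (sin t + cos t) = sin t := by
    rw [sq_sqrt (by positivity), div_mul_cancel₀ _ hd.ne']
  have hb : b ^ 2 * (sin t + cos t) = cos t := by
    rw [sq_sqrt (by positivity), div_mul_cancel₀ _ hd.ne']
  have hab : (a : ℂ) * a + b * b = 1 := by
    have : a ^ 2 + b ^ 2 = 1 := by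
      apply mul_right_cancel₀ hd.ne'
      linear_combination ha + hb
    exact_mod_cast (by linear_combination this : a * a + b * b = 1)
  rw [gisinState_eq_dephasedProduct ha hb hd]
  refine isSeparableState_dephasedProduct ?_ ?_ <;>
    simp [dotProduct, Fin.sum_univ_two, Complex.conj_ofReal] <;> linear_combination hab

lemma isSeparableState_gisinState_zero (t : ℝ) : IsSeparableState (gisinState 0 t) := by
  have h₀ := isSeparableState_dephasedProduct (α := Pi.single 0 1) (β := Pi.single 0 1)
    (by simp) (by simp)
  have h₁ := isSeparableState_dephasedProduct (α := Pi.single 1 1) (β := Pi.single 1 1)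
    (by simp) (by simp)
  convert h₀.convexComb h₁ (a := 1 / 2) (by norm_num) (by norm_num) using 1
  ext ⟨i, j⟩ ⟨k, m⟩
  fin_cases i <;> fin_cases j <;> fin_cases k <;> fin_cases m <;>
    simp [gisinState, pairToFin4, dephasedProduct]; norm_num

theorem gisin_separable_iff (l t : ℝ) (hl : l ∈ Set.Icc (0 : ℝ) 1)
    (ht : t ∈ Set.Icc (0 : ℝ) (Real.pi / 2)) :
    IsSeparableState (gisinState l t) ↔ l * (1 + Real.sin (2 * t)) ≤ 1 := by
  refine ⟨le_one_of_isSeparableState_gisinState, fun h => ?_⟩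
  have hpos : 0 < 1 + sin (2 * t) := by
    linarith [sin_nonneg_of_nonneg_of_le_pi (x := 2 * t) (by linarith [ht.1]) (by linarith [ht.2])]
  have hl' :
      l = l * (1 + sin (2 * t)) * (1 + sin (2 * t))⁻¹ + (1 - l * (1 + sin (2 * t))) * 0 := by
    rw [mul_zero, add_zero, mul_inv_cancel_right₀ hpos.ne']
  rw [hl', gisinState_convexComb]
  exact (isSeparableState_gisinState_inv_one_add_sin_two_mul ht).convexComb
    (isSeparableState_gisinState_zero t) (mul_nonneg hl.1 hpos.le) h
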